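/- A minimizer ψ̃ of the constrained variational problem −λ² = inf_{ψ∈A} E(ψ) satisfies the weak Euler–Lagrange equation: for all ψ ∈ H²(ℝ), sμ ∫_ℝ [4|ξ|² ψ̃'ψ' + (|ξ|²ψ̃ + ψ̃'')(|ξ|²ψ + ψ'')] dx + (Mξ₁)² ∫_ℝ (|ξ|²ψ̃ψ + ψ̃'ψ') dx = g|ξ|² ∫_ℝ ρ̄' ψ̃ψ dx − λ² ∫_ℝ ρ̄(|ξ|²ψ̃ψ + ψ̃'ψ') dx. -/

import Mathlib

open MeasureTheory

/-- `ψ ∈ H¹(ℝ)` with weak derivative `ψ'`. -/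
def IsH1 (ψ ψ' : ℝ → ℝ) : Prop :=
  MemLp ψ 2 volume ∧ MemLp ψ' 2 volume ∧
    ∀ x : ℝ, ψ x = ψ 0 + ∫ t in (0:ℝ)..x, ψ' t

/-- `ψ ∈ H²(ℝ)` with first and second weak derivatives `ψ'`, `ψ''`. -/
def IsH2 (ψ ψ' ψ'' : ℝ → ℝ) : Prop :=
  IsH1 ψ ψ' ∧ IsH1 ψ' ψ''

/-- `E₀(ψ) = ∫ [M²ξ₁²(ψ² + |ψ'|²/|ξ|²) − g ρ̄' ψ²]` (horizontal case). -/
noncomputable def E0 (g M ξ1 ξ2 : ℝ) (ρ' ψ ψ' : ℝ → ℝ) : ℝ :=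
  ∫ x, (M ^ 2 * ξ1 ^ 2 * ((ψ x) ^ 2 + (ψ' x) ^ 2 / (ξ1 ^ 2 + ξ2 ^ 2))
    - g * ρ' x * (ψ x) ^ 2)

/-- `E₁(ψ) = μ ∫ (4|ξ|²|ψ'|² + ||ξ|²ψ + ψ''|²)`. -/
noncomputable def E1 (μ ξ1 ξ2 : ℝ) (ψ ψ' ψ'' : ℝ → ℝ) : ℝ :=
  μ * ∫ x, (4 * (ξ1 ^ 2 + ξ2 ^ 2) * (ψ' x) ^ 2
    + ((ξ1 ^ 2 + ξ2 ^ 2) * ψ x + ψ'' x) ^ 2)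

/-- `E(ψ, s) = |ξ|² E₀(ψ) + s E₁(ψ)`. -/
noncomputable def Efun (g μ s M ξ1 ξ2 : ℝ) (ρ' ψ ψ' ψ'' : ℝ → ℝ) : ℝ :=
  (ξ1 ^ 2 + ξ2 ^ 2) * E0 g M ξ1 ξ2 ρ' ψ ψ' + s * E1 μ ξ1 ξ2 ψ ψ' ψ''

/-- `J(ψ) = ∫ ρ̄ (|ξ|²ψ² + |ψ'|²)`. -/
noncomputable def Jfun (ξ1 ξ2 : ℝ) (ρb ψ ψ' : ℝ → ℝ) : ℝ :=
  ∫ x, ρb x * ((ξ1 ^ 2 + ξ2 ^ 2) * (ψ x) ^ 2 + (ψ' x) ^ 2)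

/-- The admissible set `A = {ψ ∈ H²(ℝ) : J(ψ) = 1}` (with the natural integrability
requirements on the integrands appearing in `E` and `J`). -/
def MemA (ξ1 ξ2 : ℝ) (ρb ρ' ψ ψ' ψ'' : ℝ → ℝ) : Prop :=
  IsH2 ψ ψ' ψ'' ∧
    Integrable (fun x => ρ' x * (ψ x) ^ 2) ∧
    Integrable (fun x => ρb x * ((ξ1 ^ 2 + ξ2 ^ 2) * (ψ x) ^ 2 + (ψ' x) ^ 2)) ∧
    Integrable (fun x => ((ξ1 ^ 2 + ξ2 ^ 2) * ψ x + ψ'' x) ^ 2) ∧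
    Jfun ξ1 ξ2 ρb ψ ψ' = 1

/-!
Fix `ψ ∈ H²`. Since `E` and `J` are quadratic, `q(τ) = E(ψ̃ + τψ) + λ² J(ψ̃ + τψ)` is the
polynomial `2τ B(ψ̃, ψ) + τ² (E(ψ) + λ² J(ψ))`, where `B` is the polar form of `E + λ² J`
(using `E(ψ̃) = -λ²`, `J(ψ̃) = 1`). By 2-homogeneity, minimality of `ψ̃` on `{J = 1}` gives
`E ≥ -λ² J` wherever `J > 0`, and `J(ψ̃ + τψ) > 0` for small `τ`. So `q ≥ 0 = q(0)` near `0`,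
whence `B(ψ̃, ψ) = 0`.
-/

open Filter Topology

lemma integral_eq_add_two_mul_add_sq_mul {α : Type*} [MeasurableSpace α] {μ : Measure α}
    {F P C Q : α → ℝ} (τ : ℝ) (hF : ∀ x, F x = P x + 2 * τ * C x + τ ^ 2 * Q x)
    (hP : Integrable P μ) (hC : Integrable C μ) (hQ : Integrable Q μ) :
    ∫ x, F x ∂μ = (∫ x, P x ∂μ) + 2 * τ * (∫ x, C x ∂μ) + τ ^ 2 * ∫ x, Q x ∂μ := by
  have hPC : Integrable (fun x => P x + 2 * τ * C x) μ := hP.add (hC.const_mul _)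
  rw [integral_congr_ae (ae_of_all _ hF), integral_add hPC (hQ.const_mul _),
    integral_add hP (hC.const_mul _), integral_const_mul, integral_const_mul]

lemma integrable_mul_mul_of_memLp {α : Type*} [MeasurableSpace α] {μ : Measure α}
    {w u v : α → ℝ} (hw : MemLp w ⊤ μ) (hu : MemLp u 2 μ) (hv : MemLp v 2 μ) :
    Integrable (fun x => w x * (u x * v x)) μ :=
  (hu.integrable_mul hv).mul_of_top_right hw

namespace IsH1

variable {f f' h h' : ℝ → ℝ}

lemma const_mul (c : ℝ) (hf : IsH1 f f') : IsH1 (fun x => c * f x) (fun x => c * f' x) := by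
  obtain ⟨hf2, hf'2, hfF⟩ := hf
  refine ⟨hf2.const_mul c, hf'2.const_mul c, fun x => ?_⟩
  beta_reduce
  rw [intervalIntegral.integral_const_mul, hfF x]
  ring

lemma add (hf : IsH1 f f') (hh : IsH1 h h') :
    IsH1 (fun x => f x + h x) (fun x => f' x + h' x) := by
  obtain ⟨hf2, hf'2, hfF⟩ := hf
  obtain ⟨hh2, hh'2, hhF⟩ := hh
  refine ⟨hf2.add hh2, hf'2.add hh'2, fun x => ?_⟩
  have hii : ∀ {u : ℝ → ℝ}, MemLp u 2 volume → IntervalIntegrable u volume 0 x := fun hu =>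
    ((hu.locallyIntegrable one_le_two).integrableOn_isCompact isCompact_uIcc).intervalIntegrable
  beta_reduce
  rw [intervalIntegral.integral_add (hii hf'2) (hii hh'2), hfF x, hhF x]
  ring

end IsH1

namespace IsH2

variable {f f' f'' h h' h'' : ℝ → ℝ}

lemma const_mul (c : ℝ) (hf : IsH2 f f' f'') :
    IsH2 (fun x => c * f x) (fun x => c * f' x) (fun x => c * f'' x) :=
  ⟨hf.1.const_mul c, hf.2.const_mul c⟩

lemma add (hf : IsH2 f f' f'') (hh : IsH2 h h' h'') :
    IsH2 (fun x => f x + h x) (fun x => f' x + h' x) (fun x => f'' x + h'' x) :=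
  ⟨hf.1.add hh.1, hf.2.add hh.2⟩

end IsH2

section Forms

variable (g M ξ1 ξ2 : ℝ) (ρb ρ' : ℝ → ℝ)

noncomputable def E0Bilin (f f' h h' : ℝ → ℝ) : ℝ :=
  ∫ x, (M ^ 2 * ξ1 ^ 2 * (f x * h x + f' x * h' x / (ξ1 ^ 2 + ξ2 ^ 2))
    - g * (ρ' x * (f x * h x)))

noncomputable def E1Bilin (f f' f'' h h' h'' : ℝ → ℝ) : ℝ :=
  ∫ x, (4 * (ξ1 ^ 2 + ξ2 ^ 2) * f' x * h' x
    + ((ξ1 ^ 2 + ξ2 ^ 2) * f x + f'' x) * ((ξ1 ^ 2 + ξ2 ^ 2) * h x + h'' x))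

noncomputable def JBilin (f f' h h' : ℝ → ℝ) : ℝ :=
  ∫ x, ρb x * ((ξ1 ^ 2 + ξ2 ^ 2) * f x * h x + f' x * h' x)

lemma E0_eq_E0Bilin (f f' : ℝ → ℝ) : E0 g M ξ1 ξ2 ρ' f f' = E0Bilin g M ξ1 ξ2 ρ' f f' f f' :=
  integral_congr_ae (ae_of_all _ fun x => by ring)

lemma E1_eq_mul_E1Bilin (μ : ℝ) (f f' f'' : ℝ → ℝ) :
    E1 μ ξ1 ξ2 f f' f'' = μ * E1Bilin ξ1 ξ2 f f' f'' f f' f'' :=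
  congrArg (μ * ·) (integral_congr_ae (ae_of_all _ fun x => by ring))

lemma Jfun_eq_JBilin (f f' : ℝ → ℝ) : Jfun ξ1 ξ2 ρb f f' = JBilin ξ1 ξ2 ρb f f' f f' :=
  integral_congr_ae (ae_of_all _ fun x => by ring)

variable {ρb ρ'} {f f' f'' h h' h'' : ℝ → ℝ}

lemma integrable_E0Bilin_integrand (hρ' : MemLp ρ' ⊤ volume) (hf : MemLp f 2 volume)
    (hf' : MemLp f' 2 volume) (hh : MemLp h 2 volume) (hh' : MemLp h' 2 volume) :
    Integrable (fun x => M ^ 2 * ξ1 ^ 2 * (f x * h x + f' x * h' x / (ξ1 ^ 2 + ξ2 ^ 2))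
      - g * (ρ' x * (f x * h x))) := by
  have : Integrable (fun x => f x * h x) := hf.integrable_mul hh
  have : Integrable (fun x => f' x * h' x) := hf'.integrable_mul hh'
  have := integrable_mul_mul_of_memLp hρ' hf hh
  fun_prop

lemma integrable_E1Bilin_integrand (hf : MemLp f 2 volume) (hf' : MemLp f' 2 volume)
    (hf'' : MemLp f'' 2 volume) (hh : MemLp h 2 volume) (hh' : MemLp h' 2 volume)
    (hh'' : MemLp h'' 2 volume) :
    Integrable (fun x => 4 * (ξ1 ^ 2 + ξ2 ^ 2) * f' x * h' x
      + ((ξ1 ^ 2 + ξ2 ^ 2) * f x + f'' x) * ((ξ1 ^ 2 + ξ2 ^ 2) * h x + h'' x)) := by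
  have hd := hf'.integrable_mul hh'
  have hq := ((hf.const_mul (ξ1 ^ 2 + ξ2 ^ 2)).add hf'').integrable_mul
    ((hh.const_mul (ξ1 ^ 2 + ξ2 ^ 2)).add hh'')
  exact ((hd.const_mul (4 * (ξ1 ^ 2 + ξ2 ^ 2))).add hq).congr
    (ae_of_all _ fun x => by simp only [Pi.add_apply, Pi.mul_apply]; ring)

lemma integrable_JBilin_integrand (hρb : MemLp ρb ⊤ volume) (hf : MemLp f 2 volume)
    (hf' : MemLp f' 2 volume) (hh : MemLp h 2 volume) (hh' : MemLp h' 2 volume) :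
    Integrable (fun x => ρb x * ((ξ1 ^ 2 + ξ2 ^ 2) * f x * h x + f' x * h' x)) := by
  have h0 := integrable_mul_mul_of_memLp hρb hf hh
  have h1 := integrable_mul_mul_of_memLp hρb hf' hh'
  exact ((h0.const_mul (ξ1 ^ 2 + ξ2 ^ 2)).add h1).congr
    (ae_of_all _ fun x => by simp only [Pi.add_apply]; ring)


lemma mul_E0Bilin_eq (hξ : ξ1 ^ 2 + ξ2 ^ 2 ≠ 0) (hρ' : MemLp ρ' ⊤ volume)
    (hf : MemLp f 2 volume) (hf' : MemLp f' 2 volume) (hh : MemLp h 2 volume)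
    (hh' : MemLp h' 2 volume) :
    (ξ1 ^ 2 + ξ2 ^ 2) * E0Bilin g M ξ1 ξ2 ρ' f f' h h'
      = (M * ξ1) ^ 2 * (∫ x, ((ξ1 ^ 2 + ξ2 ^ 2) * f x * h x + f' x * h' x))
        - g * (ξ1 ^ 2 + ξ2 ^ 2) * (∫ x, ρ' x * f x * h x) := by
  have hfh : Integrable (fun x => (ξ1 ^ 2 + ξ2 ^ 2) * f x * h x + f' x * h' x) :=
    (((hf.integrable_mul hh).const_mul (ξ1 ^ 2 + ξ2 ^ 2)).add
      (hf'.integrable_mul hh')).congr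
        (ae_of_all _ fun x => by simp only [Pi.add_apply, Pi.mul_apply]; ring)
  have hρfh : Integrable (fun x => ρ' x * f x * h x) :=
    (integrable_mul_mul_of_memLp hρ' hf hh).congr (ae_of_all _ fun x => (mul_assoc _ _ _).symm)
  rw [E0Bilin, ← integral_const_mul, ← integral_const_mul, ← integral_const_mul,
    ← integral_sub (hfh.const_mul _) (hρfh.const_mul _)]
  exact integral_congr_ae (ae_of_all _ fun x => by field_simp)

lemma E0_add_mul (hρ' : MemLp ρ' ⊤ volume) (hf : MemLp f 2 volume) (hf' : MemLp f' 2 volume)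
    (hh : MemLp h 2 volume) (hh' : MemLp h' 2 volume) (τ : ℝ) :
    E0 g M ξ1 ξ2 ρ' (fun x => f x + τ * h x) (fun x => f' x + τ * h' x)
      = E0 g M ξ1 ξ2 ρ' f f' + 2 * τ * E0Bilin g M ξ1 ξ2 ρ' f f' h h'
        + τ ^ 2 * E0 g M ξ1 ξ2 ρ' h h' := by
  simp only [E0_eq_E0Bilin]
  exact integral_eq_add_two_mul_add_sq_mul τ (fun x => by ring)
    (integrable_E0Bilin_integrand g M ξ1 ξ2 hρ' hf hf' hf hf')
    (integrable_E0Bilin_integrand g M ξ1 ξ2 hρ' hf hf' hh hh')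
    (integrable_E0Bilin_integrand g M ξ1 ξ2 hρ' hh hh' hh hh')

lemma E1_add_mul (μ : ℝ) (hf : MemLp f 2 volume) (hf' : MemLp f' 2 volume)
    (hf'' : MemLp f'' 2 volume) (hh : MemLp h 2 volume) (hh' : MemLp h' 2 volume)
    (hh'' : MemLp h'' 2 volume) (τ : ℝ) :
    E1 μ ξ1 ξ2 (fun x => f x + τ * h x) (fun x => f' x + τ * h' x) (fun x => f'' x + τ * h'' x)
      = E1 μ ξ1 ξ2 f f' f'' + 2 * τ * (μ * E1Bilin ξ1 ξ2 f f' f'' h h' h'')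
        + τ ^ 2 * E1 μ ξ1 ξ2 h h' h'' := by
  simp only [E1_eq_mul_E1Bilin]
  calc _ = μ * (E1Bilin ξ1 ξ2 f f' f'' f f' f'' + 2 * τ * E1Bilin ξ1 ξ2 f f' f'' h h' h''
          + τ ^ 2 * E1Bilin ξ1 ξ2 h h' h'' h h' h'') :=
        congrArg (μ * ·) (integral_eq_add_two_mul_add_sq_mul τ (fun x => by ring)
          (integrable_E1Bilin_integrand ξ1 ξ2 hf hf' hf'' hf hf' hf'')
          (integrable_E1Bilin_integrand ξ1 ξ2 hf hf' hf'' hh hh' hh'')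
          (integrable_E1Bilin_integrand ξ1 ξ2 hh hh' hh'' hh hh' hh''))
    _ = _ := by ring

lemma Jfun_add_mul (hρb : MemLp ρb ⊤ volume) (hf : MemLp f 2 volume) (hf' : MemLp f' 2 volume)
    (hh : MemLp h 2 volume) (hh' : MemLp h' 2 volume) (τ : ℝ) :
    Jfun ξ1 ξ2 ρb (fun x => f x + τ * h x) (fun x => f' x + τ * h' x)
      = Jfun ξ1 ξ2 ρb f f' + 2 * τ * JBilin ξ1 ξ2 ρb f f' h h' + τ ^ 2 * Jfun ξ1 ξ2 ρb h h' := by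
  simp only [Jfun_eq_JBilin]
  exact integral_eq_add_two_mul_add_sq_mul τ (fun x => by ring)
    (integrable_JBilin_integrand ξ1 ξ2 hρb hf hf' hf hf')
    (integrable_JBilin_integrand ξ1 ξ2 hρb hf hf' hh hh')
    (integrable_JBilin_integrand ξ1 ξ2 hρb hh hh' hh hh')

lemma Efun_add_mul (μ s : ℝ) (hρ' : MemLp ρ' ⊤ volume) (hf : IsH2 f f' f'') (hh : IsH2 h h' h'')
    (τ : ℝ) :
    Efun g μ s M ξ1 ξ2 ρ' (fun x => f x + τ * h x) (fun x => f' x + τ * h' x)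
        (fun x => f'' x + τ * h'' x)
      = Efun g μ s M ξ1 ξ2 ρ' f f' f''
        + 2 * τ * ((ξ1 ^ 2 + ξ2 ^ 2) * E0Bilin g M ξ1 ξ2 ρ' f f' h h'
          + s * μ * E1Bilin ξ1 ξ2 f f' f'' h h' h'')
        + τ ^ 2 * Efun g μ s M ξ1 ξ2 ρ' h h' h'' := by
  unfold Efun
  rw [E0_add_mul g M ξ1 ξ2 hρ' hf.1.1 hf.1.2.1 hh.1.1 hh.1.2.1,
    E1_add_mul ξ1 ξ2 μ hf.1.1 hf.1.2.1 hf.2.2.1 hh.1.1 hh.1.2.1 hh.2.2.1]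
  ring

end Forms

section Homogeneity

variable {g μ s M ξ1 ξ2 : ℝ} {ρb ρ' : ℝ → ℝ} {f f' f'' : ℝ → ℝ}

lemma Efun_const_mul (c : ℝ) :
    Efun g μ s M ξ1 ξ2 ρ' (fun x => c * f x) (fun x => c * f' x) (fun x => c * f'' x)
      = c ^ 2 * Efun g μ s M ξ1 ξ2 ρ' f f' f'' := by
  have h0 : E0 g M ξ1 ξ2 ρ' (fun x => c * f x) (fun x => c * f' x)
      = c ^ 2 * E0 g M ξ1 ξ2 ρ' f f' := by
    rw [E0, E0, ← integral_const_mul]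
    exact integral_congr_ae (ae_of_all _ fun x => by ring)
  have h1 : E1 μ ξ1 ξ2 (fun x => c * f x) (fun x => c * f' x) (fun x => c * f'' x)
      = c ^ 2 * E1 μ ξ1 ξ2 f f' f'' := by
    rw [E1, E1, mul_left_comm (c ^ 2), ← integral_const_mul (c ^ 2)]
    exact congrArg (μ * ·) (integral_congr_ae (ae_of_all _ fun x => by ring))
  rw [Efun, Efun, h0, h1]
  ring

lemma Jfun_const_mul (c : ℝ) :
    Jfun ξ1 ξ2 ρb (fun x => c * f x) (fun x => c * f' x) = c ^ 2 * Jfun ξ1 ξ2 ρb f f' := by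
  rw [Jfun, Jfun, ← integral_const_mul]
  exact integral_congr_ae (ae_of_all _ fun x => by ring)

lemma memA_of_isH2 (hρb : MemLp ρb ⊤ volume) (hρ' : MemLp ρ' ⊤ volume) (hf : IsH2 f f' f'')
    (hJ : Jfun ξ1 ξ2 ρb f f' = 1) : MemA ξ1 ξ2 ρb ρ' f f' f'' := by
  have hf2 := hf.1.1
  have hf'2 := hf.1.2.1
  have hq := (hf2.const_mul (ξ1 ^ 2 + ξ2 ^ 2)).add hf.2.2.1
  refine ⟨hf, ?_, ?_, ?_, hJ⟩
  · exact (integrable_mul_mul_of_memLp hρ' hf2 hf2).congr (ae_of_all _ fun x => by ring)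
  · exact (integrable_JBilin_integrand ξ1 ξ2 hρb hf2 hf'2 hf2 hf'2).congr
      (ae_of_all _ fun x => by ring)
  · exact (hq.integrable_mul hq).congr
      (ae_of_all _ fun x => by simp only [Pi.add_apply, Pi.mul_apply]; ring)

lemma mul_Jfun_le_Efun {m : ℝ} (hbound : ∀ ψ ψ' ψ'' : ℝ → ℝ, MemA ξ1 ξ2 ρb ρ' ψ ψ' ψ'' →
      m ≤ Efun g μ s M ξ1 ξ2 ρ' ψ ψ' ψ'')
    (hρb : MemLp ρb ⊤ volume) (hρ' : MemLp ρ' ⊤ volume) (hf : IsH2 f f' f'')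
    (hJ : 0 < Jfun ξ1 ξ2 ρb f f') :
    m * Jfun ξ1 ξ2 ρb f f' ≤ Efun g μ s M ξ1 ξ2 ρ' f f' f'' := by
  set c := (Real.sqrt (Jfun ξ1 ξ2 ρb f f'))⁻¹
  have hc : c ^ 2 * Jfun ξ1 ξ2 ρb f f' = 1 := by
    rw [inv_pow, Real.sq_sqrt hJ.le, inv_mul_cancel₀ hJ.ne']
  have hm := hbound _ _ _ (memA_of_isH2 hρb hρ' (hf.const_mul c) ((Jfun_const_mul c).trans hc))
  rw [Efun_const_mul] at hm
  calc m * Jfun ξ1 ξ2 ρb f f' ≤ c ^ 2 * Efun g μ s M ξ1 ξ2 ρ' f f' f'' * Jfun ξ1 ξ2 ρb f f' :=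
        mul_le_mul_of_nonneg_right hm hJ.le
    _ = Efun g μ s M ξ1 ξ2 ρ' f f' f'' := by rw [mul_right_comm, hc, one_mul]

end Homogeneity

lemma eq_zero_of_eventually_nonneg_quadratic {a b : ℝ}
    (h : ∀ᶠ τ in 𝓝 0, 0 ≤ 2 * τ * b + τ ^ 2 * a) : b = 0 := by
  have hmin : IsLocalMin (fun τ => 2 * τ * b + τ ^ 2 * a) 0 := by
    filter_upwards [h] with τ hτ
    simpa using hτ
  have hderiv : HasDerivAt (fun τ : ℝ => 2 * τ * b + τ ^ 2 * a) (2 * b) 0 := by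
    simpa using (((hasDerivAt_id (0 : ℝ)).const_mul 2).mul_const b).fun_add
      ((hasDerivAt_pow 2 (0 : ℝ)).mul_const a)
  linarith [hmin.hasDerivAt_eq_zero hderiv]

theorem statement8_general (g μ s M ξ1 ξ2 R lam : ℝ)
    (hξ : ξ1 ^ 2 + ξ2 ^ 2 ≠ 0)
    (ρb ρ' : ℝ → ℝ) (hρmeas : Measurable ρb) (hρpos : ∀ x, 0 < ρb x)
    (hρbd : ∀ x, ρb x ≤ R)
    (hcont : Continuous ρ') (hsupp : HasCompactSupport ρ')
    (ψt ψt' ψt'' : ℝ → ℝ) (hmem : MemA ξ1 ξ2 ρb ρ' ψt ψt' ψt'')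
    (hmin : ∀ ψ ψ' ψ'' : ℝ → ℝ, MemA ξ1 ξ2 ρb ρ' ψ ψ' ψ'' →
      Efun g μ s M ξ1 ξ2 ρ' ψt ψt' ψt'' ≤ Efun g μ s M ξ1 ξ2 ρ' ψ ψ' ψ'')
    (hlam : Efun g μ s M ξ1 ξ2 ρ' ψt ψt' ψt'' = -lam ^ 2) :
    ∀ ψ ψ' ψ'' : ℝ → ℝ, IsH2 ψ ψ' ψ'' →
      s * μ * (∫ x, (4 * (ξ1 ^ 2 + ξ2 ^ 2) * ψt' x * ψ' x +
          ((ξ1 ^ 2 + ξ2 ^ 2) * ψt x + ψt'' x) * ((ξ1 ^ 2 + ξ2 ^ 2) * ψ x + ψ'' x)))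
        + (M * ξ1) ^ 2 * (∫ x, ((ξ1 ^ 2 + ξ2 ^ 2) * ψt x * ψ x + ψt' x * ψ' x))
      = g * (ξ1 ^ 2 + ξ2 ^ 2) * (∫ x, ρ' x * ψt x * ψ x)
        - lam ^ 2 * ∫ x, ρb x * ((ξ1 ^ 2 + ξ2 ^ 2) * ψt x * ψ x + ψt' x * ψ' x) := by
  intro ψ ψ' ψ'' hψ
  obtain ⟨hψt, -, -, -, hJψt⟩ := hmem
  have hρ' : MemLp ρ' ⊤ volume := hcont.memLp_top_of_hasCompactSupport hsupp volume
  have hρb : MemLp ρb ⊤ volume := memLp_top_of_bound hρmeas.aestronglyMeasurable R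
    (ae_of_all _ fun x => (Real.norm_of_nonneg (hρpos x).le).trans_le (hρbd x))
  have hJ : ∀ τ, Jfun ξ1 ξ2 ρb (fun x => ψt x + τ * ψ x) (fun x => ψt' x + τ * ψ' x)
      = 1 + 2 * τ * JBilin ξ1 ξ2 ρb ψt ψt' ψ ψ' + τ ^ 2 * Jfun ξ1 ξ2 ρb ψ ψ' := fun τ => by
    rw [Jfun_add_mul ξ1 ξ2 hρb hψt.1.1 hψt.1.2.1 hψ.1.1 hψ.1.2.1, hJψt]
  have hJpos : ∀ᶠ τ in 𝓝 0,
      0 < Jfun ξ1 ξ2 ρb (fun x => ψt x + τ * ψ x) (fun x => ψt' x + τ * ψ' x) := by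
    simp only [hJ]
    exact continuousAt_const.eventually_lt (by fun_prop) (by norm_num)
  have hvar : ∀ᶠ τ in 𝓝 0, 0 ≤ 2 * τ * ((ξ1 ^ 2 + ξ2 ^ 2) * E0Bilin g M ξ1 ξ2 ρ' ψt ψt' ψ ψ'
        + s * μ * E1Bilin ξ1 ξ2 ψt ψt' ψt'' ψ ψ' ψ'' + lam ^ 2 * JBilin ξ1 ξ2 ρb ψt ψt' ψ ψ')
      + τ ^ 2 * (Efun g μ s M ξ1 ξ2 ρ' ψ ψ' ψ'' + lam ^ 2 * Jfun ξ1 ξ2 ρb ψ ψ') := by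
    filter_upwards [hJpos] with τ hτ
    have h := mul_Jfun_le_Efun (fun φ φ' φ'' hφ => hlam ▸ hmin φ φ' φ'' hφ) hρb hρ'
      (hψt.add (hψ.const_mul τ)) hτ
    rw [hJ, Efun_add_mul g M ξ1 ξ2 μ s hρ' hψt hψ, hlam] at h
    linear_combination h
  have hEL := eq_zero_of_eventually_nonneg_quadratic hvar
  rw [mul_E0Bilin_eq g M ξ1 ξ2 hξ hρ' hψt.1.1 hψt.1.2.1 hψ.1.1 hψ.1.2.1, E1Bilin, JBilin] at hEL
  linear_combination hEL

/-- A minimizer `ψ̃` of `E` on `A` with `E(ψ̃) = −λ²` satisfies the weak Euler–Lagrange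
identity: for all `ψ ∈ H²(ℝ)`,
`sμ ∫ [4|ξ|²ψ̃'ψ' + (|ξ|²ψ̃+ψ̃'')(|ξ|²ψ+ψ'')] + (Mξ₁)² ∫ (|ξ|²ψ̃ψ + ψ̃'ψ')
  = g|ξ|² ∫ ρ̄'ψ̃ψ − λ² ∫ ρ̄(|ξ|²ψ̃ψ + ψ̃'ψ')`. -/
theorem statement8 (g μ s M ξ1 ξ2 K R lam : ℝ) (hg : 0 < g) (hμ : 0 < μ) (hs : 0 < s)
    (hξ : ξ1 ^ 2 + ξ2 ^ 2 ≠ 0)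
    (ρb ρ' : ℝ → ℝ) (hρmeas : Measurable ρb) (hρpos : ∀ x, 0 < ρb x)
    (hρbd : ∀ x, ρb x ≤ R)
    (hcont : Continuous ρ') (hsupp : HasCompactSupport ρ')
    (hK : ∀ x, |ρ' x| ≤ K * ρb x)
    (ψt ψt' ψt'' : ℝ → ℝ) (hmem : MemA ξ1 ξ2 ρb ρ' ψt ψt' ψt'')
    (hmin : ∀ ψ ψ' ψ'' : ℝ → ℝ, MemA ξ1 ξ2 ρb ρ' ψ ψ' ψ'' →
      Efun g μ s M ξ1 ξ2 ρ' ψt ψt' ψt'' ≤ Efun g μ s M ξ1 ξ2 ρ' ψ ψ' ψ'')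
    (hlam : Efun g μ s M ξ1 ξ2 ρ' ψt ψt' ψt'' = -lam ^ 2) :
    ∀ ψ ψ' ψ'' : ℝ → ℝ, IsH2 ψ ψ' ψ'' →
      s * μ * (∫ x, (4 * (ξ1 ^ 2 + ξ2 ^ 2) * ψt' x * ψ' x +
          ((ξ1 ^ 2 + ξ2 ^ 2) * ψt x + ψt'' x) * ((ξ1 ^ 2 + ξ2 ^ 2) * ψ x + ψ'' x)))
        + (M * ξ1) ^ 2 * (∫ x, ((ξ1 ^ 2 + ξ2 ^ 2) * ψt x * ψ x + ψt' x * ψ' x))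
      = g * (ξ1 ^ 2 + ξ2 ^ 2) * (∫ x, ρ' x * ψt x * ψ x)
        - lam ^ 2 * ∫ x, ρb x * ((ξ1 ^ 2 + ξ2 ^ 2) * ψt x * ψ x + ψt' x * ψ' x) :=
  statement8_general g μ s M ξ1 ξ2 R lam hξ ρb ρ' hρmeas hρpos hρbd hcont hsupp ψt ψt' ψt'' hmem
    hmin hlam
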